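/- arXiv:2005.05885 — 2 statements merged into one kernel-verified Lean document; each statement's English description precedes it below -/
import Mathlib

section
/- For each i ∈ {1,...,n}, the product of the automorphisms σ_{j,i} over all j ≠ i (in any order) equals the inner automorphism of W_n given by conjugation by x_i. -/
/-- The universal Coxeter group of rank `n`: the free product of `n` copies of `ℤ/2ℤ`. -/
abbrev W (n : ℕ) : Type := Monoid.CoprodI (fun _ : Fin n => Multiplicative (ZMod 2))

/-- The standard generator `xᵢ` of `Wₙ`: the image of the generator of the `i`-th factor. -/
def x {n : ℕ} (i : Fin n) : W n := Monoid.CoprodI.of (i := i) (Multiplicative.ofAdd 1)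

/-! Both sides are automorphisms, so it suffices to compare them on the generators `x j`.
Every factor `σ_{k,i}` fixes `x i`, so both sides fix `x i = x i * x i * x i`. For `j ≠ i`, the
only factor moving `x j` is `σ_{j,i}`; the factors to its right fix `x j`, and those to its left
fix both `x i` and `x j`, hence fix `σ_{j,i} (x j) = x i * x j * x i`. -/

namespace MulAut

variable {M : Type*} [Monoid M]

theorem list_prod_apply_eq_self {L : List (MulAut M)} {g : M} (h : ∀ τ ∈ L, τ g = g) :
    L.prod g = g := by
  have : L.prod ∈ MulAction.stabilizer (MulAut M) g :=
    Subgroup.list_prod_mem _ fun τ hτ => MulAction.mem_stabilizer_iff.mpr (h τ hτ)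
  exact MulAction.mem_stabilizer_iff.mp this

theorem prod_map_apply_eq_apply_of_nodup {ι : Type*} {σ : ι → MulAut M} {l : List ι}
    (hnd : l.Nodup) {k : ι} (hk : k ∈ l) {g : M}
    (hfix : ∀ j ∈ l, j ≠ k → σ j g = g ∧ σ j (σ k g) = σ k g) :
    (l.map σ).prod g = σ k g := by
  obtain ⟨l₁, l₂, rfl⟩ := List.append_of_mem hk
  have hk' : k ∉ l₁ ++ l₂ := (List.nodup_cons.mp (List.nodup_middle.mp hnd)).1
  have hfix' : ∀ j ∈ l₁ ++ l₂, σ j g = g ∧ σ j (σ k g) = σ k g := fun j hj =>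
    hfix j (List.mem_append.mpr ((List.mem_append.mp hj).imp_right (List.mem_cons_of_mem k)))
      (ne_of_mem_of_not_mem hj hk')
  have h₂ : (l₂.map σ).prod g = g := list_prod_apply_eq_self <| by
    simpa using fun j hj => (hfix' j (List.mem_append_right _ hj)).1
  have h₁ : (l₁.map σ).prod (σ k g) = σ k g := list_prod_apply_eq_self <| by
    simpa using fun j hj => (hfix' j (List.mem_append_left _ hj)).2
  simp only [List.map_append, List.map_cons, List.prod_append, List.prod_cons, mul_apply, h₂, h₁]

end MulAut

theorem x_mul_self {n : ℕ} (i : Fin n) : x i * x i = 1 := by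
  rw [x, ← map_mul, ← ofAdd_add, show (1 : ZMod 2) + 1 = 0 by decide, ofAdd_zero, map_one]

theorem x_inv {n : ℕ} (i : Fin n) : (x i)⁻¹ = x i :=
  inv_eq_of_mul_eq_one_right (x_mul_self i)

theorem W.hom_ext {n : ℕ} {M : Type*} [Monoid M] {f g : W n →* M}
    (h : ∀ j, f (x j) = g (x j)) : f = g := by
  refine Monoid.CoprodI.ext_hom f g fun j => MonoidHom.ext fun m => ?_
  obtain rfl | rfl : m = 1 ∨ m = Multiplicative.ofAdd 1 := by revert m; decide
  · simp
  · exact h j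

theorem W.mulAut_ext {n : ℕ} {φ ψ : MulAut (W n)} (h : ∀ j, φ (x j) = ψ (x j)) : φ = ψ :=
  MulEquiv.toMonoidHom_injective (W.hom_ext h)

theorem prod_partial_conjugations_eq_conj_general {n : ℕ} (i : Fin n)
    (σ : Fin n → MulAut (W n))
    (hσ : ∀ j, j ≠ i → σ j (x j) = x i * x j * x i ∧ ∀ k, k ≠ j → σ j (x k) = x k)
    (l : List (Fin n)) (hnd : l.Nodup) (hmem : ∀ j, j ∈ l ↔ j ≠ i) :
    (l.map σ).prod = MulAut.conj (x i) := by
  refine W.mulAut_ext fun j => ?_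
  rw [MulAut.conj_apply, x_inv]
  by_cases hji : j = i
  · subst hji
    rw [x_mul_self, one_mul]
    refine MulAut.list_prod_apply_eq_self ?_
    simpa using fun k hk => (hσ k ((hmem k).mp hk)).2 j (Ne.symm ((hmem k).mp hk))
  · rw [MulAut.prod_map_apply_eq_apply_of_nodup hnd ((hmem j).mpr hji) fun k hk hkj => ?_,
      (hσ j hji).1]
    have hki := (hmem k).mp hk
    rw [(hσ j hji).1, map_mul, map_mul, (hσ k hki).2 j (Ne.symm hkj),
      (hσ k hki).2 i (Ne.symm hki)]
    exact ⟨rfl, rfl⟩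

/-- For each `i`, the product of the automorphisms `σ_{j,i}` over all `j ≠ i`,
taken in any order, equals the inner automorphism of `Wₙ` given by conjugation by `xᵢ`. -/
theorem prod_partial_conjugations_eq_conj {n : ℕ} (hn : 2 ≤ n) (i : Fin n)
    (σ : Fin n → MulAut (W n))
    (hσ : ∀ j, j ≠ i → σ j (x j) = x i * x j * x i ∧ ∀ k, k ≠ j → σ j (x k) = x k)
    (l : List (Fin n)) (hnd : l.Nodup) (hmem : ∀ j, j ∈ l ↔ j ≠ i) :
    (l.map σ).prod = MulAut.conj (x i) :=
  prod_partial_conjugations_eq_conj_general i σ hσ l hnd hmem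
end

section
/- Let T be a finite tree and S a set of vertices of T that contains every leaf of T, and suppose every vertex of T not in S has degree at least 3. Then distinct edges of T induce distinct bipartitions of S: for an edge e, the bipartition of S is given by the intersection of S with the two connected components of T minus the interior of e; if e ≠ f are edges, these bipartitions of S are different. -/
/-!
Write `A, B` for the two sides of the edge `ab` and `C, D` for those of `cd`.
If `S ∩ A ⊆ C`, then `A ∩ D` contains no point of `S`, since `C` and `D` are disjoint.
But a nonempty `A ∩ D` has a vertex of degree at most two: take one farthest from `b`;
its neighbours farther from `b` leave `A ∩ D`, and can only do so through the edge `dc`,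
while in a tree at most one neighbour is closer. So `A ∩ D = ∅`, and likewise `B ∩ C = ∅`.
Now `c` lies in `A` or `B`; in `B` it would lie in `B ∩ C`, and in `A` the edge `cd ≠ ab`
would put `d` in `A ∩ D`.
-/

open Finset

namespace SimpleGraph

variable {V : Type*} {G : SimpleGraph V}

theorem Adj.eq_of_reachable_deleteEdges_of_not_reachable {e : Sym2 V} {x v w : V}
    (hvw : G.Adj v w) (hv : (G.deleteEdges {e}).Reachable x v)
    (hw : ¬ (G.deleteEdges {e}).Reachable x w) : s(v, w) = e := by
  by_contra hne
  exact hw (hv.trans (Adj.reachable (by simp [hvw, hne])))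

theorem Reachable.deleteEdges_or {a b w : V} (h : G.Reachable a w) :
    (G.deleteEdges {s(a, b)}).Reachable a w ∨ (G.deleteEdges {s(a, b)}).Reachable b w := by
  obtain ⟨p⟩ := h
  suffices ∀ {u} (q : G.Walk u w), (G.deleteEdges {s(a, b)}).Reachable a u ∨
      (G.deleteEdges {s(a, b)}).Reachable b u →
      (G.deleteEdges {s(a, b)}).Reachable a w ∨ (G.deleteEdges {s(a, b)}).Reachable b w from
    this p (Or.inl .rfl)
  intro u q
  clear p
  induction q with
  | nil => exact id
  | @cons u x w hux q ih =>
    intro hu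
    apply ih
    by_cases he : s(u, x) = s(a, b)
    · rcases Sym2.eq_iff.mp he with ⟨-, rfl⟩ | ⟨-, rfl⟩
      exacts [Or.inr .rfl, Or.inl .rfl]
    · have hux' : (G.deleteEdges {s(a, b)}).Adj u x := by simp [hux, he]
      exact hu.imp (·.trans hux'.reachable) (·.trans hux'.reachable)

theorem IsAcyclic.eq_of_adj_of_dist_lt (hG : G.IsAcyclic) {u v w₁ w₂ : V}
    (h₁ : G.Adj v w₁) (h₂ : G.Adj v w₂) (hd₁ : G.dist u w₁ < G.dist u v)
    (hd₂ : G.dist u w₂ < G.dist u v) : w₁ = w₂ := by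
  classical
  have huv : G.Reachable u v := .of_dist_ne_zero (by omega)
  obtain ⟨p, hp, -⟩ := huv.exists_path_of_dist
  -- a neighbour closer to `u` lies on the geodesic from `u` to `v`, hence is its penultimate vertex
  have hpen : ∀ {w}, G.Adj v w → G.dist u w < G.dist u v → w = p.penultimate := by
    intro w hvw hd
    obtain ⟨q, hq, hql⟩ := (huv.trans hvw.reachable).exists_path_of_dist
    have hvq : v ∉ q.support := fun hv ↦ by
      have := dist_le (q.takeUntil v hv)
      have := q.length_takeUntil_le_length hv
      omega
    exact hG.eq_penultimate_of_adj_end hp hvw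
      (hG.mem_support_of_ne_mem_support_of_adj_of_isPath hp hq hvw hvq)
  exact (hpen h₁ hd₁).trans (hpen h₂ hd₂).symm

theorem IsTree.degree_le_card_dist_lt_add_one (hG : G.IsTree) (u v : V)
    [Fintype (G.neighborSet v)] :
    G.degree v ≤ #{w ∈ G.neighborFinset v | G.dist u v < G.dist u w} + 1 := by
  rw [← card_neighborFinset_eq_degree,
    ← card_filter_add_card_filter_not (fun w ↦ G.dist u v < G.dist u w)]
  gcongr
  refine card_le_one.mpr fun w₁ h₁ w₂ h₂ ↦ ?_
  simp only [mem_filter, mem_neighborFinset, not_lt] at h₁ h₂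
  exact hG.isAcyclic.eq_of_adj_of_dist_lt h₁.1 h₂.1
    (h₁.2.lt_of_ne (hG.dist_ne_of_adj u h₁.1).symm)
    (h₂.2.lt_of_ne (hG.dist_ne_of_adj u h₂.1).symm)

variable [Fintype V] [DecidableRel G.Adj]

theorem IsTree.exists_degree_le_two_of_reachable_deleteEdges (hG : G.IsTree) {a b c d v₀ : V}
    (ha : (G.deleteEdges {s(a, b)}).Reachable a v₀)
    (hd : (G.deleteEdges {s(c, d)}).Reachable d v₀) :
    ∃ v, (G.deleteEdges {s(a, b)}).Reachable a v ∧ (G.deleteEdges {s(c, d)}).Reachable d v ∧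
      G.degree v ≤ 2 := by
  classical
  obtain ⟨v, hv, hmax⟩ := exists_max_image
    {v | (G.deleteEdges {s(a, b)}).Reachable a v ∧ (G.deleteEdges {s(c, d)}).Reachable d v}
    (G.dist b) ⟨v₀, by simp [ha, hd]⟩
  simp only [mem_filter, mem_univ, true_and, and_imp] at hv hmax
  refine ⟨v, hv.1, hv.2, ?_⟩
  have hfar : {w ∈ G.neighborFinset v | G.dist b v < G.dist b w} ⊆ {c} := by
    intro w hw
    simp only [mem_filter, mem_neighborFinset] at hw
    obtain ⟨hvw, hlt⟩ := hw
    by_cases hwa : (G.deleteEdges {s(a, b)}).Reachable a w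
    · have hwd : ¬ (G.deleteEdges {s(c, d)}).Reachable d w :=
        fun hwd ↦ (hmax w hwa hwd).not_gt hlt
      rcases Sym2.eq_iff.mp (hvw.eq_of_reachable_deleteEdges_of_not_reachable hv.2 hwd)
        with ⟨-, rfl⟩ | ⟨-, rfl⟩
      · exact absurd .rfl hwd
      · exact mem_singleton_self w
    · rcases Sym2.eq_iff.mp (hvw.eq_of_reachable_deleteEdges_of_not_reachable hv.1 hwa)
        with ⟨-, rfl⟩ | ⟨-, rfl⟩
      · simp at hlt
      · exact absurd .rfl hwa
  calc G.degree v ≤ #{w ∈ G.neighborFinset v | G.dist b v < G.dist b w} + 1 :=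
        hG.degree_le_card_dist_lt_add_one b v
    _ ≤ #{c} + 1 := by gcongr
    _ = 2 := rfl

theorem IsTree.not_reachable_deleteEdges_of_subset (hG : G.IsTree) {S : Set V}
    (hdeg : ∀ v, v ∉ S → 3 ≤ G.degree v) {a b c d v : V} (hcd : G.Adj c d)
    (hAC : {u ∈ S | (G.deleteEdges {s(a, b)}).Reachable a u} ⊆
      {u ∈ S | (G.deleteEdges {s(c, d)}).Reachable c u})
    (hv : (G.deleteEdges {s(a, b)}).Reachable a v) :
    ¬ (G.deleteEdges {s(c, d)}).Reachable d v := by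
  intro hvd
  obtain ⟨x, hxa, hxd, hx⟩ := hG.exists_degree_le_two_of_reachable_deleteEdges hv hvd
  have hxS : x ∈ S := by
    by_contra hxS
    have := hdeg x hxS
    omega
  have hbridge : G.IsBridge s(c, d) := isAcyclic_iff_forall_adj_isBridge.mp hG.isAcyclic hcd
  exact isBridge_iff.mp hbridge ((hAC ⟨hxS, hxa⟩).2.trans hxd.symm)

theorem IsTree.not_subset_and_subset_of_ne (hG : G.IsTree) {S : Set V}
    (hdeg : ∀ v, v ∉ S → 3 ≤ G.degree v) {a b c d : V} (hcd : G.Adj c d)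
    (hne : s(a, b) ≠ s(c, d)) :
    ¬ ({u ∈ S | (G.deleteEdges {s(a, b)}).Reachable a u} ⊆
          {u ∈ S | (G.deleteEdges {s(c, d)}).Reachable c u} ∧
        {u ∈ S | (G.deleteEdges {s(a, b)}).Reachable b u} ⊆
          {u ∈ S | (G.deleteEdges {s(c, d)}).Reachable d u}) := by
  rintro ⟨hAC, hBD⟩
  rcases (hG.connected a c).deleteEdges_or (b := b) with hc | hc
  · have hcd' : (G.deleteEdges {s(a, b)}).Adj c d := by simp [hcd, hne.symm]
    exact hG.not_reachable_deleteEdges_of_subset hdeg hcd hAC (hc.trans hcd'.reachable) .rfl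
  · rw [Sym2.eq_swap (a := a)] at hc hBD
    rw [Sym2.eq_swap (a := c)] at hBD
    exact hG.not_reachable_deleteEdges_of_subset hdeg hcd.symm hBD hc .rfl

end SimpleGraph

theorem tree_edges_induce_distinct_partitions_general {V : Type} [Fintype V]
    (G : SimpleGraph V) [DecidableRel G.Adj] (hT : G.IsTree) (S : Set V)
    (hdeg : ∀ v, v ∉ S → 3 ≤ G.degree v)
    (a b c d : V) (hcd : G.Adj c d)
    (hne : s(a, b) ≠ s(c, d)) :
    ¬ (({u ∈ S | (G.deleteEdges {s(a, b)}).Reachable a u} =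
          {u ∈ S | (G.deleteEdges {s(c, d)}).Reachable c u} ∧
        {u ∈ S | (G.deleteEdges {s(a, b)}).Reachable b u} =
          {u ∈ S | (G.deleteEdges {s(c, d)}).Reachable d u}) ∨
       ({u ∈ S | (G.deleteEdges {s(a, b)}).Reachable a u} =
          {u ∈ S | (G.deleteEdges {s(c, d)}).Reachable d u} ∧
        {u ∈ S | (G.deleteEdges {s(a, b)}).Reachable b u} =
          {u ∈ S | (G.deleteEdges {s(c, d)}).Reachable c u})) := by
  rintro (⟨h₁, h₂⟩ | ⟨h₁, h₂⟩)
  · exact hT.not_subset_and_subset_of_ne hdeg hcd hne ⟨h₁.le, h₂.le⟩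
  · rw [Sym2.eq_swap (a := c)] at hne h₁ h₂
    exact hT.not_subset_and_subset_of_ne hdeg hcd.symm hne ⟨h₁.le, h₂.le⟩

/-- Let `T` be a finite tree and `S` a set of vertices containing every leaf, such that every
vertex not in `S` has degree at least 3. Then distinct edges of `T` induce distinct
(unordered) bipartitions of `S`, where the bipartition induced by an edge is given by
intersecting `S` with the two connected components obtained by deleting the edge. -/
theorem tree_edges_induce_distinct_partitions {V : Type} [Fintype V] [DecidableEq V]
    (G : SimpleGraph V) [DecidableRel G.Adj] (hT : G.IsTree) (S : Set V)
    (hleaves : ∀ v, G.degree v = 1 → v ∈ S)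
    (hdeg : ∀ v, v ∉ S → 3 ≤ G.degree v)
    (a b c d : V) (hab : G.Adj a b) (hcd : G.Adj c d)
    (hne : s(a, b) ≠ s(c, d)) :
    ¬ (({u ∈ S | (G.deleteEdges {s(a, b)}).Reachable a u} =
          {u ∈ S | (G.deleteEdges {s(c, d)}).Reachable c u} ∧
        {u ∈ S | (G.deleteEdges {s(a, b)}).Reachable b u} =
          {u ∈ S | (G.deleteEdges {s(c, d)}).Reachable d u}) ∨
       ({u ∈ S | (G.deleteEdges {s(a, b)}).Reachable a u} =
          {u ∈ S | (G.deleteEdges {s(c, d)}).Reachable d u} ∧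
        {u ∈ S | (G.deleteEdges {s(a, b)}).Reachable b u} =
          {u ∈ S | (G.deleteEdges {s(c, d)}).Reachable c u})) :=
  tree_edges_induce_distinct_partitions_general G hT S hdeg a b c d hcd hne
end
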